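/- For every h ∈ ℂ, the 9×9-matrix-valued function q ↦ (G(q)⁻¹ ⊗ G(q)⁻¹) R(q) (G(q) ⊗ G(q)), defined for complex q ∉ {0, 1}, converges as q → 1 (through values q ≠ 1) to the matrix R_h; i.e., the contraction limit lim_{q→1} (G(q)⁻¹ ⊗ G(q)⁻¹) R(q) (G(q) ⊗ G(q)) = R_h holds (eq. (2.10): the super-Jordanian R-matrix of U_h(sl(2|1)) in the fundamental ⊗ fundamental representation). -/

import Mathlib

noncomputable section

namespace SuperJordanian

open Matrix
open scoped Kronecker

/-- `G(q) = I₃ + (h/(q−1)) E₁₂`. -/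
def G (h q : ℂ) : Matrix (Fin 3) (Fin 3) ℂ :=
  1 + (h / (q - 1)) • single 0 1 1

/-- `G(q)⁻¹ = I₃ − (h/(q−1)) E₁₂` (since `E₁₂² = 0`). -/
def Ginv (h q : ℂ) : Matrix (Fin 3) (Fin 3) ℂ :=
  1 - (h / (q - 1)) • single 0 1 1

/-- The `R`-matrix of `U_q(sl(2|1))` in the fundamental ⊗ fundamental representation:
diagonal `(q,1,1,1,q,1,1,1,−q⁻²)`, entries `q − q⁻¹` at positions `(2,4)`, `(3,7)`, `(6,8)`
(in the pair indexing: `((0,1),(1,0))`, `((0,2),(2,0))`, `((1,2),(2,1))`), zero elsewhere. -/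
def Rq (q : ℂ) : Matrix (Fin 3 × Fin 3) (Fin 3 × Fin 3) ℂ := fun p r =>
  if p = r then
    (if p = (0, 0) ∨ p = (1, 1) then q else if p = (2, 2) then -(q⁻¹) ^ 2 else 1)
  else if (p = (0, 1) ∧ r = (1, 0)) ∨ (p = (0, 2) ∧ r = (2, 0)) ∨ (p = (1, 2) ∧ r = (2, 1))
    then q - q⁻¹
  else 0

/-- The super-Jordanian `R_h`-matrix in the fundamental ⊗ fundamental representation:
the identity except `(R_h)₁₂ = h`, `(R_h)₁₄ = −h`, `(R_h)₁₅ = h²`, `(R_h)₂₅ = h`,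
`(R_h)₄₅ = −h`, `(R_h)₉₉ = −1`. -/
def Rh (h : ℂ) : Matrix (Fin 3 × Fin 3) (Fin 3 × Fin 3) ℂ := fun p r =>
  if p = r then (if p = (2, 2) then -1 else 1)
  else if p = (0, 0) ∧ r = (0, 1) then h
  else if p = (0, 0) ∧ r = (1, 0) then -h
  else if p = (0, 0) ∧ r = (1, 1) then h ^ 2
  else if p = (0, 1) ∧ r = (1, 1) then h
  else if p = (1, 0) ∧ r = (1, 1) then -h
  else 0

/-! With `t = h/(q-1)` and `N = ΔE₁₂ = E₁₂ ⊗ 1 + 1 ⊗ E₁₂`, which satisfies `N³ = 0`, one has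
`G(q) ⊗ G(q) = exp(tN)` and `G(q)⁻¹ ⊗ G(q)⁻¹ = exp(-tN)`, so the conjugated `R`-matrix is
`∑ₖ tᵏ/k! ad_Nᵏ R(q)` with `ad_N X = ⁅X, N⁆ = XN - NX`. Now `ad_N R(q) = (q-1) R₁(q)` and
`ad_N R₁(q) = (1 - q⁻¹) N²`, which commutes with `N`: each power of `t` comes with a compensating
power of `q - 1`, the conjugate is `R(q) + h R₁(q) + h²/(2q) N²`, and this is continuous at `q = 1`,
where it equals `R_h`. -/

section Hadamard

variable {K A : Type*} [Ring A]

theorem smul_commutator [CommRing K] [Algebra K A] (c : K) (X N : A) :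
    ⁅c • X, N⁆ = c • ⁅X, N⁆ := by
  rw [Ring.lie_def, Ring.lie_def, smul_mul_assoc, mul_smul_comm, smul_sub]

theorem conj_eq_of_pow_three_eq_zero [Field K] [CharZero K] [Algebra K A] (t : K) {N X : A}
    (hN : N ^ 3 = 0) (hX : ⁅⁅⁅X, N⁆, N⁆, N⁆ = 0) :
    (1 - t • N + (t ^ 2 / 2) • N ^ 2) * X * (1 + t • N + (t ^ 2 / 2) • N ^ 2) =
      X + t • ⁅X, N⁆ + (t ^ 2 / 2) • ⁅⁅X, N⁆, N⁆ := by
  have hsym : N ^ 2 * X * N = N * X * N ^ 2 := by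
    have hlie3 : ⁅⁅⁅X, N⁆, N⁆, N⁆ =
        X * N ^ 3 - N ^ 3 * X + 3 • (N ^ 2 * X * N - N * X * N ^ 2) := by
      simp only [Ring.lie_def]
      noncomm_ring
    rw [hX, hN, mul_zero, zero_mul, sub_zero, zero_add, ← Nat.cast_smul_eq_nsmul K,
      eq_comm, smul_eq_zero, sub_eq_zero] at hlie3
    exact hlie3.resolve_left (by norm_num)
  have hquartic : N ^ 2 * X * N ^ 2 = 0 :=
    calc N ^ 2 * X * N ^ 2 = N * (N * X * N ^ 2) := by noncomm_ring
      _ = N ^ 3 * X * N := by rw [← hsym]; noncomm_ring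
      _ = 0 := by rw [hN, zero_mul, zero_mul]
  calc (1 - t • N + (t ^ 2 / 2) • N ^ 2) * X * (1 + t • N + (t ^ 2 / 2) • N ^ 2)
      = X + t • ⁅X, N⁆ + (t ^ 2 / 2) • ⁅⁅X, N⁆, N⁆
        + (t ^ 3 / 2) • (N ^ 2 * X * N - N * X * N ^ 2) + (t ^ 4 / 4) • (N ^ 2 * X * N ^ 2) := by
        simp only [Ring.lie_def, pow_two, mul_add, add_mul, sub_mul, mul_sub, one_mul, mul_one,
          smul_mul_assoc, mul_smul_comm, mul_assoc, smul_sub]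
        module
    _ = X + t • ⁅X, N⁆ + (t ^ 2 / 2) • ⁅⁅X, N⁆, N⁆ := by
        rw [hsym, sub_self, hquartic, smul_zero, smul_zero, add_zero, add_zero]

end Hadamard

section SquareZero

variable {K n : Type*} [Fintype n] [DecidableEq n]

theorem kronecker_one_add_one_kronecker_sq [CommRing K] {E : Matrix n n K} (hE : E * E = 0) :
    (E ⊗ₖ 1 + 1 ⊗ₖ E) ^ 2 = (2 : K) • (E ⊗ₖ E) := by
  simp only [pow_two, add_mul, mul_add, ← mul_kronecker_mul, hE, mul_one, one_mul,
    zero_kronecker, kronecker_zero, zero_add, add_zero]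
  rw [two_smul]

theorem kronecker_one_add_one_kronecker_pow_three [CommRing K] {E : Matrix n n K}
    (hE : E * E = 0) : (E ⊗ₖ 1 + 1 ⊗ₖ E) ^ 3 = 0 := by
  rw [pow_succ, kronecker_one_add_one_kronecker_sq hE, smul_mul_assoc, mul_add,
    ← mul_kronecker_mul, ← mul_kronecker_mul, hE]
  simp

theorem one_add_smul_kronecker_self [Field K] [CharZero K] {E : Matrix n n K} (hE : E * E = 0)
    (t : K) :
    (1 + t • E) ⊗ₖ (1 + t • E) =
      1 + t • (E ⊗ₖ 1 + 1 ⊗ₖ E) + (t ^ 2 / 2) • (E ⊗ₖ 1 + 1 ⊗ₖ E) ^ 2 := by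
  rw [kronecker_one_add_one_kronecker_sq hE, smul_smul]
  simp only [add_kronecker, kronecker_add, smul_kronecker, kronecker_smul, one_kronecker_one]
  module

end SquareZero

def E₁₂ : Matrix (Fin 3) (Fin 3) ℂ := single 0 1 1

def H : Matrix (Fin 3) (Fin 3) ℂ := single 0 0 1 - single 1 1 1

def ΔE₁₂ : Matrix (Fin 3 × Fin 3) (Fin 3 × Fin 3) ℂ := E₁₂ ⊗ₖ 1 + 1 ⊗ₖ E₁₂

def R₁ (q : ℂ) : Matrix (Fin 3 × Fin 3) (Fin 3 × Fin 3) ℂ := H ⊗ₖ E₁₂ - q⁻¹ • (E₁₂ ⊗ₖ H)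

theorem E₁₂_mul_self : E₁₂ * E₁₂ = 0 := by simp [E₁₂]

theorem H_mul_E₁₂ : H * E₁₂ = E₁₂ := by simp [H, E₁₂, sub_mul]

theorem E₁₂_mul_H : E₁₂ * H = (-1 : ℂ) • E₁₂ := by simp [H, E₁₂, mul_sub]

theorem lie_Rq_ΔE₁₂ {q : ℂ} (hq : q ≠ 0) : ⁅Rq q, ΔE₁₂⁆ = (q - 1) • R₁ q := by
  ext ⟨i, j⟩ ⟨k, l⟩
  simp only [Ring.lie_def, ΔE₁₂, R₁, H, E₁₂, mul_apply, Fintype.sum_prod_type, Fin.sum_univ_three,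
    Matrix.sub_apply, Matrix.add_apply, Matrix.smul_apply, kroneckerMap_apply, single_apply,
    one_apply]
  fin_cases i <;> fin_cases j <;> fin_cases k <;> fin_cases l <;> simp [Rq] <;> field_simp <;> ring

theorem lie_R₁_ΔE₁₂ (q : ℂ) : ⁅R₁ q, ΔE₁₂⁆ = (1 - q⁻¹) • ΔE₁₂ ^ 2 := by
  rw [ΔE₁₂, kronecker_one_add_one_kronecker_sq E₁₂_mul_self, Ring.lie_def, R₁]
  simp only [sub_mul, mul_sub, mul_add, add_mul, smul_mul_assoc, mul_smul_comm,
    ← mul_kronecker_mul, H_mul_E₁₂, E₁₂_mul_H, E₁₂_mul_self, mul_one, one_mul, kronecker_zero,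
    zero_kronecker, kronecker_smul, smul_kronecker]
  module

theorem conj_Rq_eq {h q : ℂ} (hq0 : q ≠ 0) (hq1 : q ≠ 1) :
    (Ginv h q ⊗ₖ Ginv h q) * Rq q * (G h q ⊗ₖ G h q) =
      Rq q + h • R₁ q + (h ^ 2 / (2 * q)) • ΔE₁₂ ^ 2 := by
  set t := h / (q - 1)
  have hG : G h q ⊗ₖ G h q = 1 + t • ΔE₁₂ + (t ^ 2 / 2) • ΔE₁₂ ^ 2 :=
    one_add_smul_kronecker_self E₁₂_mul_self t
  have hGinv : Ginv h q ⊗ₖ Ginv h q = 1 - t • ΔE₁₂ + (t ^ 2 / 2) • ΔE₁₂ ^ 2 := by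
    have hneg := one_add_smul_kronecker_self E₁₂_mul_self (-t)
    rwa [neg_smul, ← sub_eq_add_neg, neg_smul, ← sub_eq_add_neg, neg_sq] at hneg
  have hlie3 : ⁅⁅⁅Rq q, ΔE₁₂⁆, ΔE₁₂⁆, ΔE₁₂⁆ = 0 := by
    rw [lie_Rq_ΔE₁₂ hq0, smul_commutator, smul_commutator, lie_R₁_ΔE₁₂, smul_commutator,
      (Commute.pow_self _ 2).lie_eq, smul_zero, smul_zero]
  rw [hGinv, hG, conj_eq_of_pow_three_eq_zero (N := ΔE₁₂) t
      (kronecker_one_add_one_kronecker_pow_three E₁₂_mul_self) hlie3,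
    lie_Rq_ΔE₁₂ hq0, smul_commutator, lie_R₁_ΔE₁₂, smul_smul, smul_smul, smul_smul]
  have ht : t * (q - 1) = h := div_mul_cancel₀ h (sub_ne_zero.2 hq1)
  have ht2 : t ^ 2 / 2 * (q - 1) * (1 - q⁻¹) = h ^ 2 / (2 * q) := by
    rw [← ht]
    field_simp
  rw [ht, ht2]

theorem continuousAt_Rq {q : ℂ} (hq : q ≠ 0) : ContinuousAt Rq q := by
  refine continuousAt_pi.2 fun p => continuousAt_pi.2 fun r => ?_
  simp only [Rq]
  split_ifs <;> fun_prop (disch := assumption)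

theorem Rh_eq (h : ℂ) : Rh h = Rq 1 + h • R₁ 1 + (h ^ 2 / 2) • ΔE₁₂ ^ 2 := by
  rw [ΔE₁₂, kronecker_one_add_one_kronecker_sq E₁₂_mul_self, smul_smul,
    div_mul_cancel₀ _ two_ne_zero]
  ext ⟨i, j⟩ ⟨k, l⟩
  fin_cases i <;> fin_cases j <;> fin_cases k <;> fin_cases l <;>
    simp [Rh, Rq, R₁, H, E₁₂]

/-- the contraction limit
`lim_{q→1} (G(q)⁻¹ ⊗ G(q)⁻¹) R(q) (G(q) ⊗ G(q)) = R_h`,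
the limit being taken through values `q ∉ {0, 1}`. -/
theorem statement13 (h : ℂ) :
    Filter.Tendsto (fun q : ℂ => (Ginv h q ⊗ₖ Ginv h q) * Rq q * (G h q ⊗ₖ G h q))
      (nhdsWithin 1 {q : ℂ | q ≠ 0 ∧ q ≠ 1}) (nhds (Rh h)) := by
  have hcont : ContinuousAt (fun q => Rq q + h • R₁ q + (h ^ 2 / (2 * q)) • ΔE₁₂ ^ 2) 1 := by
    have hRq := continuousAt_Rq one_ne_zero
    unfold R₁
    fun_prop (disch := norm_num)
  have hlim := hcont.tendsto
  rw [mul_one, ← Rh_eq] at hlim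
  exact (hlim.mono_left nhdsWithin_le_nhds).congr'
    (eventuallyEq_nhdsWithin_of_eqOn fun q hq => (conj_Rq_eq hq.1 hq.2).symm)

end SuperJordanian
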